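/- arXiv:1901.08069 — 8 statements merged into one kernel-verified Lean document; each statement's English description precedes it below -/
import Mathlib

section
/- Let p be a prime, ω := Complex.exp(2πi/p), and for z : ZMod p set e(z) := ω^(z.val). Fix t x : ZMod p. For g h : ZMod p define the ℂ-linear map ρ(g,h) : (ZMod p → ℂ) →ₗ[ℂ] (ZMod p → ℂ) by (ρ(g,h) f)(m) = e(h * (x + t * m)) * f(m − g). Then for all g h g' h' : ZMod p, ρ(g,h) ∘ ρ(g',h') = e(−(t * g * h')) • ρ(g + g', h + h'). -/
/-- Composition rule for the annular action `ρ(g,h)` on the binary interface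
defect labeled `x` between the domain walls `R` and `F_t`:
`ρ(g,h) ∘ ρ(g',h') = e(−t g h') • ρ(g+g', h+h')`. -/
theorem stmt_2 (p : ℕ) [Fact p.Prime]
    (e : ZMod p → ℂ)
    (he : ∀ z : ZMod p, e z = Complex.exp (2 * Real.pi * Complex.I / p) ^ z.val)
    (t x : ZMod p)
    (ρ : ZMod p → ZMod p → ((ZMod p → ℂ) →ₗ[ℂ] (ZMod p → ℂ)))
    (hρ : ∀ (g h : ZMod p) (f : ZMod p → ℂ) (m : ZMod p),
      ρ g h f m = e (h * (x + t * m)) * f (m - g)) :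
    ∀ g h g' h' : ZMod p,
      (ρ g h).comp (ρ g' h') = e (-(t * g * h')) • ρ (g + g') (h + h') := by
  have hp : (p : ℂ) ≠ 0 := Nat.cast_ne_zero.mpr (Fact.out (p := p.Prime)).pos.ne'
  have hω : Complex.exp (2 * Real.pi * Complex.I / p) ^ p = 1 := by
    rw [← Complex.exp_nat_mul]
    have : (p : ℂ) * (2 * Real.pi * Complex.I / p) = 2 * Real.pi * Complex.I := by
      field_simp
    rw [this, Complex.exp_two_pi_mul_I]
  have hadd : ∀ a b : ZMod p, e (a + b) = e a * e b := by
    intro a b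
    rw [he, he, he, ← pow_add, ZMod.val_add]
    conv_rhs => rw [← Nat.div_add_mod (a.val + b.val) p]
    rw [pow_add, pow_mul, hω, one_pow, one_mul]
  intro g h g' h'
  apply LinearMap.ext
  intro f
  funext m
  simp only [LinearMap.comp_apply, LinearMap.smul_apply, Pi.smul_apply, smul_eq_mul, hρ]
  have key : h * (x + t * m) + h' * (x + t * (m - g))
      = -(t * g * h') + (h + h') * (x + t * m) := by ring
  rw [← mul_assoc, ← mul_assoc, ← hadd, ← hadd, key, sub_sub]
end

section
/- Let p be a prime, ω := Complex.exp(2πi/p), and for z : ZMod p set e(z) := ω^(z.val). Fix t x : ZMod p with t ≠ 0, and for g h : ZMod p let ρ(g,h) : (ZMod p → ℂ) →ₗ[ℂ] (ZMod p → ℂ) be defined by (ρ(g,h) f)(m) = e(h * (x + t * m)) * f(m − g). If a ℂ-linear map T : (ZMod p → ℂ) →ₗ[ℂ] (ZMod p → ℂ) satisfies T ∘ ρ(g,h) = ρ(g,h) ∘ T for all g h : ZMod p, then there exists c : ℂ with T = c • LinearMap.id. -/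
/-- Irreducibility of the defect representation `ρ` (for `t ≠ 0`): any linear
map commuting with all `ρ(g,h)` is a scalar multiple of the identity. -/
theorem stmt_3 (p : ℕ) [Fact p.Prime]
    (e : ZMod p → ℂ)
    (he : ∀ z : ZMod p, e z = Complex.exp (2 * Real.pi * Complex.I / p) ^ z.val)
    (t x : ZMod p) (ht : t ≠ 0)
    (ρ : ZMod p → ZMod p → ((ZMod p → ℂ) →ₗ[ℂ] (ZMod p → ℂ)))
    (hρ : ∀ (g h : ZMod p) (f : ZMod p → ℂ) (m : ZMod p),
      ρ g h f m = e (h * (x + t * m)) * f (m - g))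
    (T : (ZMod p → ℂ) →ₗ[ℂ] (ZMod p → ℂ))
    (hT : ∀ g h : ZMod p, T.comp (ρ g h) = (ρ g h).comp T) :
    ∃ c : ℂ, T = c • LinearMap.id := by
  have hp : p.Prime := Fact.out
  have hp0 : p ≠ 0 := hp.ne_zero
  have hprim : IsPrimitiveRoot (Complex.exp (2 * Real.pi * Complex.I / p)) p :=
    Complex.isPrimitiveRoot_exp p hp0
  have einj : Function.Injective e := by
    intro a b hab
    rw [he, he] at hab
    have := hprim.pow_inj (ZMod.val_lt a) (ZMod.val_lt b) hab
    exact ZMod.val_injective p this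
  have he0 : e 0 = 1 := by
    rw [he]; simp [ZMod.val_zero]
  set δ : ZMod p → (ZMod p → ℂ) := fun n m => if m = n then 1 else 0 with hδ
  -- off-diagonal entries vanish
  have hdiag : ∀ n m : ZMod p, m ≠ n → T (δ n) m = 0 := by
    intro n m hmn
    have key := congrFun (LinearMap.congr_fun (hT 0 1) (δ n)) m
    simp only [LinearMap.comp_apply] at key
    have hρδ : ρ 0 1 (δ n) = e (1 * (x + t * n)) • δ n := by
      funext m'
      rw [hρ]
      simp only [sub_zero, Pi.smul_apply, smul_eq_mul, hδ]
      by_cases h : m' = n <;> simp [h]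
    rw [hρδ, map_smul] at key
    rw [hρ] at key
    simp only [Pi.smul_apply, smul_eq_mul, sub_zero] at key
    have hne : e (1 * (x + t * n)) ≠ e (1 * (x + t * m)) := by
      intro hcon
      apply hmn
      have h1 := einj hcon
      rw [one_mul, one_mul] at h1
      exact (mul_left_cancel₀ ht (add_left_cancel h1)).symm
    rcases mul_eq_mul_right_iff.mp key.symm with h | h
    · exact absurd h.symm hne
    · exact h
  -- diagonal entries are constant
  set c : ℂ := T (δ 0) 0 with hc
  have hshift : ∀ g : ZMod p, ρ g 0 (δ 0) = δ g := by
    intro g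
    funext m
    rw [hρ]
    simp only [zero_mul, he0, one_mul, hδ]
    by_cases h : m = g <;> simp [h, sub_eq_zero]
  have hdiagval : ∀ n : ZMod p, T (δ n) n = c := by
    intro n
    have key := congrFun (LinearMap.congr_fun (hT n 0) (δ 0)) n
    simp only [LinearMap.comp_apply] at key
    rw [hshift, hρ] at key
    simp only [zero_mul, he0, one_mul, sub_self] at key
    rw [key, hc]
  refine ⟨c, ?_⟩
  apply LinearMap.ext; intro f; funext m
  simp only [LinearMap.smul_apply, LinearMap.id_apply, Pi.smul_apply, smul_eq_mul]
  have hf : f = ∑ n : ZMod p, f n • δ n := by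
    funext m'
    simp only [Finset.sum_apply, Pi.smul_apply, smul_eq_mul, hδ, mul_ite, mul_one, mul_zero]
    rw [Finset.sum_ite_eq]
    simp
  have hTf : T f = ∑ n : ZMod p, f n • T (δ n) := by
    conv_lhs => rw [hf]
    rw [map_sum]
    simp
  rw [hTf]
  simp only [Finset.sum_apply, Pi.smul_apply, smul_eq_mul]
  rw [Finset.sum_eq_single m]
  · rw [hdiagval]; ring
  · intro b _ hb
    rw [hdiag b m (Ne.symm hb), mul_zero]
  · simp
end

section
/- Let p be a prime, ω := Complex.exp(2πi/p), and for z : ZMod p set e(z) := ω^(z.val). Let q : ZMod p with q ≠ 0. Then there is no function θ : ZMod p × ZMod p → ℂ with θ (0,0) = 1 such that θ(u + v) = θ(u) * θ(v) * e(q * u.1 * v.2) for all u v : ZMod p × ZMod p. In other words, the 2-cocycle β(u,v) := e(q * u.1 * v.2) on (Z/pZ)² is not a coboundary. -/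
/-- For `q ≠ 0`, the 2-cocycle `β(u,v) = e(q u₁ v₂)` on `(ZMod p)²` is not a
coboundary: there is no normalized function `θ` with
`θ(u+v) = θ(u) θ(v) e(q u₁ v₂)`. -/
theorem stmt_6 (p : ℕ) [Fact p.Prime]
    (e : ZMod p → ℂ)
    (he : ∀ z : ZMod p, e z = Complex.exp (2 * Real.pi * Complex.I / p) ^ z.val)
    (q : ZMod p) (hq : q ≠ 0) :
    ¬ ∃ θ : ZMod p × ZMod p → ℂ,
        θ (0, 0) = 1 ∧
        ∀ u v : ZMod p × ZMod p, θ (u + v) = θ u * θ v * e (q * u.1 * v.2) := by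
  rintro ⟨θ, h0, hθ⟩
  have hp : p ≠ 0 := (Fact.out : p.Prime).ne_zero
  have hzero : ((0,0) : ZMod p × ZMod p) = 0 := rfl
  have he0 : e 0 = 1 := by simp [he]
  have hne : ∀ u, θ u ≠ 0 := by
    intro u hu
    have h := hθ u (-u)
    rw [add_neg_cancel, hu, zero_mul, zero_mul, ← hzero, h0] at h
    exact one_ne_zero h
  have h1 := hθ ((1,0) : ZMod p × ZMod p) ((0,1) : ZMod p × ZMod p)
  have h2 := hθ ((0,1) : ZMod p × ZMod p) ((1,0) : ZMod p × ZMod p)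
  have hadd : ((1,0) : ZMod p × ZMod p) + (0,1) = (0,1) + (1,0) := by ring
  rw [hadd, h2] at h1
  simp only [mul_one, mul_zero, zero_mul, he0] at h1
  have heq : e q = 1 := by
    have hne1 := hne ((0,1) : ZMod p × ZMod p)
    have hne2 := hne ((1,0) : ZMod p × ZMod p)
    have h' : θ (1,0) * θ (0,1) * e q = θ (1,0) * θ (0,1) * 1 := by
      rw [mul_one, ← h1]; ring
    exact mul_left_cancel₀ (mul_ne_zero hne2 hne1) h' 
  rw [he q] at heq
  have hprim := Complex.isPrimitiveRoot_exp p hp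
  have hdvd : p ∣ q.val := hprim.dvd_of_pow_eq_one q.val heq
  have hlt : q.val < p := ZMod.val_lt q
  have hv : q.val ≠ 0 := by
    intro h
    exact hq (by rwa [← ZMod.val_eq_zero])
  exact absurd hlt (not_lt.2 (Nat.le_of_dvd (Nat.pos_of_ne_zero hv) hdvd))
end

section
/- Let p be a prime, ω := Complex.exp(2πi/p), and for z : ZMod p set e(z) := ω^(z.val). Fix q r : ZMod p with q ≠ 0. For a b c : ZMod p define the ℂ-linear map τ(a,b,c) : (ZMod p → ℂ) →ₗ[ℂ] (ZMod p → ℂ) by (τ(a,b,c) f)(m) = e(−(c * q * m)) * f(m − a − q⁻¹ * r * b). Then for all a b c a' b' c' : ZMod p, τ(a,b,c) ∘ τ(a',b',c') = e(c' * (q * a + r * b)) • τ(a + a', b + b', c + c'). -/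
/-- Composition rule for the 3-string annular action `τ(a,b,c)` attached to the
trivalent vertex realizing `F_q ⊗ F_r ≅ X_{q⁻¹ r}`:
`τ(a,b,c) ∘ τ(a',b',c') = e(c'(q a + r b)) • τ(a+a', b+b', c+c')`. -/
theorem stmt_7 (p : ℕ) [Fact p.Prime]
    (e : ZMod p → ℂ)
    (he : ∀ z : ZMod p, e z = Complex.exp (2 * Real.pi * Complex.I / p) ^ z.val)
    (q r : ZMod p) (hq : q ≠ 0)
    (τ : ZMod p → ZMod p → ZMod p → ((ZMod p → ℂ) →ₗ[ℂ] (ZMod p → ℂ)))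
    (hτ : ∀ (a b c : ZMod p) (f : ZMod p → ℂ) (m : ZMod p),
      τ a b c f m = e (-(c * q * m)) * f (m - a - q⁻¹ * r * b)) :
    ∀ a b c a' b' c' : ZMod p,
      (τ a b c).comp (τ a' b' c') =
        e (c' * (q * a + r * b)) • τ (a + a') (b + b') (c + c') := by
  have hp : (p : ℂ) ≠ 0 :=
    Nat.cast_ne_zero.mpr (Fact.out (p := p.Prime)).pos.ne'
  have hω : (Complex.exp (2 * Real.pi * Complex.I / p)) ^ p = 1 := by
    rw [← Complex.exp_nat_mul]
    have : (p : ℂ) * (2 * Real.pi * Complex.I / p) = 2 * Real.pi * Complex.I := by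
      field_simp
    rw [this]
    exact Complex.exp_two_pi_mul_I
  have key : ∀ x y : ZMod p, e (x + y) = e x * e y := by
    intro x y
    rw [he, he, he, ← pow_add, ZMod.val_add, ← pow_eq_pow_mod _ hω]
  intro a b c a' b' c'
  apply LinearMap.ext; intro f
  funext m
  simp only [LinearMap.comp_apply, LinearMap.smul_apply, Pi.smul_apply, smul_eq_mul, hτ]
  have harg : m - a - q⁻¹ * r * b - a' - q⁻¹ * r * b' =
      m - (a + a') - q⁻¹ * r * (b + b') := by ring
  rw [harg, ← mul_assoc, ← mul_assoc, ← key, ← key]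
  congr 2
  have hqi : q * q⁻¹ = 1 := mul_inv_cancel₀ hq
  linear_combination c' * r * b * hqi
end

section
/- Let p be a prime, ω := Complex.exp(2πi/p), and for z : ZMod p set e(z) := ω^(z.val). Fix q r : ZMod p with q ≠ 0, and for a b c : ZMod p let τ(a,b,c) : (ZMod p → ℂ) →ₗ[ℂ] (ZMod p → ℂ) be defined by (τ(a,b,c) f)(m) = e(−(c * q * m)) * f(m − a − q⁻¹ * r * b). If a ℂ-linear map T : (ZMod p → ℂ) →ₗ[ℂ] (ZMod p → ℂ) satisfies T ∘ τ(a,b,c) = τ(a,b,c) ∘ T for all a b c : ZMod p, then there exists d : ℂ with T = d • LinearMap.id. -/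
/-- Irreducibility of the trivalent-vertex representation `τ`: any linear map
commuting with all `τ(a,b,c)` is a scalar multiple of the identity. -/
theorem stmt_8 (p : ℕ) [Fact p.Prime]
    (e : ZMod p → ℂ)
    (he : ∀ z : ZMod p, e z = Complex.exp (2 * Real.pi * Complex.I / p) ^ z.val)
    (q r : ZMod p) (hq : q ≠ 0)
    (τ : ZMod p → ZMod p → ZMod p → ((ZMod p → ℂ) →ₗ[ℂ] (ZMod p → ℂ)))
    (hτ : ∀ (a b c : ZMod p) (f : ZMod p → ℂ) (m : ZMod p),
      τ a b c f m = e (-(c * q * m)) * f (m - a - q⁻¹ * r * b))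
    (T : (ZMod p → ℂ) →ₗ[ℂ] (ZMod p → ℂ))
    (hT : ∀ a b c : ZMod p, T.comp (τ a b c) = (τ a b c).comp T) :
    ∃ d : ℂ, T = d • LinearMap.id := by
  have hp : p.Prime := Fact.out
  have hp0 : p ≠ 0 := hp.ne_zero
  have hω : IsPrimitiveRoot (Complex.exp (2 * Real.pi * Complex.I / p)) p :=
    Complex.isPrimitiveRoot_exp p hp0
  have he0 : e 0 = 1 := by rw [he]; simp
  have einj : Function.Injective e := by
    intro z w hzw
    rw [he, he] at hzw
    have := hω.pow_inj (ZMod.val_lt z) (ZMod.val_lt w) hzw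
    exact ZMod.val_injective p this
  have hqq : q⁻¹ * q = 1 := inv_mul_cancel₀ hq
  set g : ZMod p → ℂ := T (Pi.single 0 1) with hg
  set d := g 0 with hd
  -- g vanishes off 0
  have hB : ∀ m : ZMod p, m ≠ 0 → g m = 0 := by
    intro m hm
    have hτ1 : τ 0 0 q⁻¹ (Pi.single 0 1) = Pi.single 0 1 := by
      funext m'
      rw [hτ]
      have h1 : m' - 0 - q⁻¹ * r * 0 = m' := by ring
      rw [h1]
      simp only [Pi.single_apply]
      split_ifs with h
      · subst h
        have : -(q⁻¹ * q * (0 : ZMod p)) = 0 := by ring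
        rw [this, he0]; ring
      · ring
    have h := congrFun (congrArg (fun L => L (Pi.single 0 1)) (hT 0 0 q⁻¹)) m
    simp only [LinearMap.comp_apply, hτ1] at h
    rw [hτ] at h
    have h2 : m - 0 - q⁻¹ * r * 0 = m := by ring
    rw [h2] at h
    -- h : g m = e (-(q⁻¹ * q * m)) * g m
    by_contra hgm
    have hne : e (-(q⁻¹ * q * m)) = 1 := by
      exact mul_right_cancel₀ hgm (by rw [one_mul, ← h])
    have : (-(q⁻¹ * q * m)) = 0 := by
      apply einj
      rw [hne, he0]
    rw [hqq, one_mul, neg_eq_zero] at this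
    exact hm this
  -- T on basis vectors
  have hA : ∀ n : ZMod p, T (Pi.single n 1) = d • (Pi.single n 1 : ZMod p → ℂ) := by
    intro n
    have hτ2 : τ n 0 0 (Pi.single 0 1) = Pi.single n 1 := by
      funext m'
      rw [hτ]
      have h0 : -((0 : ZMod p) * q * m') = 0 := by ring
      rw [h0, he0, one_mul]
      have h1 : m' - n - q⁻¹ * r * 0 = m' - n := by ring
      rw [h1]
      simp only [Pi.single_apply, sub_eq_zero]
    have h := congrFun (congrArg (fun L => L (Pi.single 0 1)) (hT n 0 0))
    funext m
    have hm := h m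
    simp only [LinearMap.comp_apply, hτ2] at hm
    rw [hτ] at hm
    have h0 : -((0 : ZMod p) * q * m) = 0 := by ring
    rw [h0, he0, one_mul] at hm
    have h1 : m - n - q⁻¹ * r * 0 = m - n := by ring
    rw [h1] at hm
    -- hm : T (Pi.single n 1) m = g (m - n)
    rw [hm]
    by_cases hmn : m = n
    · subst hmn
      simp [← hg, ← hd, Pi.single_apply]
    · have : m - n ≠ 0 := sub_ne_zero.mpr hmn
      have hb := hB _ this
      rw [hg] at hb
      rw [hb]
      simp [Pi.single_apply, hmn]
  refine ⟨d, LinearMap.pi_ext fun i x => ?_⟩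
  have hx : (Pi.single i x : ZMod p → ℂ) = x • (Pi.single i 1 : ZMod p → ℂ) := by
    funext j
    simp [Pi.single_apply, mul_comm]
  rw [hx, map_smul, map_smul, hA]
  simp [smul_smul, mul_comm]
end

section
/- Let p be a prime, ω := Complex.exp(2πi/p), and for z : ZMod p set e(z) := ω^(z.val). Let A be an associative unital ℂ-algebra, a : ZMod p, and u : ZMod p → A a family with u 0 = 1 and u g * u h = e(a * g * h) • u (g + h) for all g h : ZMod p. Let Θ : ZMod p → ℂ satisfy Θ 0 = 1 and Θ(g + h) = Θ(g) * Θ(h) * e(a * g * h) for all g h : ZMod p. For x : ZMod p define E x := (p : ℂ)⁻¹ • ∑_{g : ZMod p} (e(g * x) * Θ g) • u g. Then (i) E x * E x = E x for every x; (ii) E x * E y = 0 whenever x ≠ y; and (iii) ∑_{x : ZMod p} E x = 1. -/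
/-!
Since `Θ` trivializes the cocycle `e(a g h)`, the rescaled elements `w g := Θ g • u g` satisfy
`w (g + h) = w g * w h`, i.e. `w` is an honest additive character of `ZMod p` with values in `A`,
and `e` is the standard primitive additive character of `ZMod p`. The `E x` are then the usual
Fourier idempotents `p⁻¹ ∑ g, e(g x) • w g`, and all three claims reduce to the orthogonality
relation `∑ g, e(g c) = if c = 0 then p else 0`.
-/

def AddChar.ofCocycleTrivialization {G K A : Type*} [AddMonoid G] [CommSemiring K] [Semiring A]
    [Algebra K A] (c : G → G → K) (u : G → A) (Θ : G → K) (hu0 : u 0 = 1)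
    (hu : ∀ g h, u g * u h = c g h • u (g + h)) (hΘ0 : Θ 0 = 1)
    (hΘ : ∀ g h, Θ (g + h) = Θ g * Θ h * c g h) : AddChar G A where
  toFun g := Θ g • u g
  map_zero_eq_one' := by rw [hu0, hΘ0, one_smul]
  map_add_eq_mul' g h := by rw [smul_mul_smul_comm, hu, smul_smul, hΘ]

section FourierIdempotent

variable {R K A : Type*} [CommRing R] [Fintype R] [DecidableEq R] [Field K] [CharZero K]
  [Ring A] [Algebra K A]

noncomputable def fourierIdempotent (ψ : AddChar R K) (w : AddChar R A) (x : R) : A :=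
  (Fintype.card R : K)⁻¹ • ∑ g, ψ (g * x) • w g

variable {ψ : AddChar R K} (w : AddChar R A)

theorem fourierIdempotent_mul (hψ : ψ.IsPrimitive) (x y : R) :
    fourierIdempotent ψ w x * fourierIdempotent ψ w y =
      if x = y then fourierIdempotent ψ w y else 0 := by
  have hcard : (Fintype.card R : K) ≠ 0 := Nat.cast_ne_zero.mpr Fintype.card_ne_zero
  have hterm : ∀ g h, (ψ (g * x) • w g) * (ψ (h * y) • w h) =
      (ψ (g * (x - y)) * ψ ((g + h) * y)) • w (g + h) := by
    intro g h
    rw [smul_mul_smul_comm, ← AddChar.map_add_eq_mul, ← AddChar.map_add_eq_mul,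
      ← AddChar.map_add_eq_mul]
    ring_nf
  -- substituting `k = g + h` separates the sum over `g` as a character sum
  have hdouble : ∑ g, ∑ h, (ψ (g * x) • w g) * (ψ (h * y) • w h) =
      ∑ k, ((∑ g, ψ (g * (x - y))) * ψ (k * y)) • w k :=
    calc ∑ g, ∑ h, (ψ (g * x) • w g) * (ψ (h * y) • w h)
        = ∑ g, ∑ k, (ψ (g * (x - y)) * ψ (k * y)) • w k := Finset.sum_congr rfl fun g _ => by
          simp only [hterm]
          exact Equiv.sum_comp (Equiv.addLeft g) fun k => (ψ (g * (x - y)) * ψ (k * y)) • w k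
      _ = ∑ k, ((∑ g, ψ (g * (x - y))) * ψ (k * y)) • w k := by
          rw [Finset.sum_comm]
          simp only [Finset.sum_mul, Finset.sum_smul]
  rw [fourierIdempotent, fourierIdempotent, smul_mul_smul_comm, Finset.sum_mul_sum, hdouble]
  simp only [AddChar.sum_mulShift _ hψ, sub_eq_zero]
  split_ifs
  · simp only [mul_smul, ← Finset.smul_sum, inv_smul_smul₀ hcard]
  · simp

theorem sum_fourierIdempotent (hψ : ψ.IsPrimitive) : ∑ x, fourierIdempotent ψ w x = 1 := by
  have hcard : (Fintype.card R : K) ≠ 0 := Nat.cast_ne_zero.mpr Fintype.card_ne_zero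
  have hsum : ∀ g : R, ∑ x, ψ (g * x) = if g = 0 then (Fintype.card R : K) else 0 := fun g => by
    simp only [mul_comm g]
    exact_mod_cast AddChar.sum_mulShift g hψ
  calc ∑ x, fourierIdempotent ψ w x
      = (Fintype.card R : K)⁻¹ • ∑ g, (∑ x, ψ (g * x)) • w g := by
        simp only [fourierIdempotent, ← Finset.smul_sum, Finset.sum_smul]
        rw [Finset.sum_comm]
    _ = 1 := by
        simp only [hsum, ite_smul, zero_smul, Finset.sum_ite_eq', Finset.mem_univ, if_true,
          AddChar.map_zero_eq_one, inv_smul_smul₀ hcard]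

end FourierIdempotent

theorem ZMod.stdAddChar_apply_eq_exp_pow {p : ℕ} [NeZero p] (z : ZMod p) :
    ZMod.stdAddChar z = Complex.exp (2 * Real.pi * Complex.I / p) ^ z.val := by
  rw [ZMod.stdAddChar_apply, ZMod.toCircle_apply, ← Complex.exp_nat_mul]
  ring_nf

/-- In a twisted group algebra of `ZMod p` with 2-cocycle `e(a g h)` trivialized
by `Θ`, the elements `E x = p⁻¹ • ∑ g, (e(g x) Θ(g)) • u g` form a complete
family of orthogonal idempotents. -/
theorem stmt_9 (p : ℕ) [Fact p.Prime]
    (e : ZMod p → ℂ)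
    (he : ∀ z : ZMod p, e z = Complex.exp (2 * Real.pi * Complex.I / p) ^ z.val)
    (A : Type*) [Ring A] [Algebra ℂ A]
    (a : ZMod p) (u : ZMod p → A)
    (hu0 : u 0 = 1)
    (hu : ∀ g h : ZMod p, u g * u h = e (a * g * h) • u (g + h))
    (Θ : ZMod p → ℂ) (hΘ0 : Θ 0 = 1)
    (hΘ : ∀ g h : ZMod p, Θ (g + h) = Θ g * Θ h * e (a * g * h))
    (E : ZMod p → A)
    (hE : ∀ x : ZMod p, E x = (p : ℂ)⁻¹ • ∑ g : ZMod p, (e (g * x) * Θ g) • u g) :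
    (∀ x : ZMod p, E x * E x = E x) ∧
    (∀ x y : ZMod p, x ≠ y → E x * E y = 0) ∧
    (∑ x : ZMod p, E x = 1) := by
  set w := AddChar.ofCocycleTrivialization (fun g h => e (a * g * h)) u Θ hu0 hu hΘ0 hΘ
  have hψ := ZMod.isPrimitive_stdAddChar p
  have hE_eq : E = fourierIdempotent ZMod.stdAddChar w := by
    funext x
    simp only [hE, fourierIdempotent, ZMod.card, he, ← ZMod.stdAddChar_apply_eq_exp_pow, mul_smul]
    rfl
  subst hE_eq
  refine ⟨fun x => ?_, fun x y hxy => ?_, sum_fourierIdempotent w hψ⟩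
  · rw [fourierIdempotent_mul w hψ, if_pos rfl]
  · rw [fourierIdempotent_mul w hψ, if_neg hxy]
end

section
/- Let p be a prime, ω := Complex.exp(2πi/p), and for z : ZMod p set e(z) := ω^(z.val). Let V be a nonzero finite-dimensional ℂ-vector space, t : ZMod p with t ≠ 0, and W : ZMod p × ZMod p → (V →ₗ[ℂ] V) a family of linear maps with W (0,0) = LinearMap.id and W u ∘ W v = e(−(t * u.1 * v.2)) • W (u + v) for all u v : ZMod p × ZMod p. Then p divides Module.finrank ℂ V. -/
/-- Any nonzero finite-dimensional projective representation of `(ZMod p)²`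
with the Heisenberg 2-cocycle `e(−t u₁ v₂)` (`t ≠ 0`) has dimension divisible
by `p`. -/
theorem stmt_10 (p : ℕ) [Fact p.Prime]
    (e : ZMod p → ℂ)
    (he : ∀ z : ZMod p, e z = Complex.exp (2 * Real.pi * Complex.I / p) ^ z.val)
    (V : Type*) [AddCommGroup V] [Module ℂ V] [FiniteDimensional ℂ V] [Nontrivial V]
    (t : ZMod p) (ht : t ≠ 0)
    (W : ZMod p × ZMod p → (V →ₗ[ℂ] V))
    (hW0 : W (0, 0) = LinearMap.id)
    (hW : ∀ u v : ZMod p × ZMod p,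
      (W u).comp (W v) = e (-(t * u.1 * v.2)) • W (u + v)) :
    p ∣ Module.finrank ℂ V := by
  have hp : p.Prime := Fact.out
  set ω : ℂ := Complex.exp (2 * Real.pi * Complex.I / p) with hω
  have hprim : IsPrimitiveRoot ω p := by
    simpa [hω] using Complex.isPrimitiveRoot_exp p hp.ne_zero
  have hωne : ω ≠ 0 := Complex.exp_ne_zero _
  have hene : ∀ z : ZMod p, e z ≠ 0 := fun z => by
    rw [he z]; exact pow_ne_zero _ hωne
  set n := Module.finrank ℂ V with hn
  -- e 0 = 1
  have he0 : e 0 = 1 := by rw [he 0, ZMod.val_zero, pow_zero]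
  -- key commutation: A B = e(-t) • W(1,1), B A = W(1,1)
  have hAB : (W (1, 0)).comp (W (0, 1)) = e (-t) • W (1, 1) := by
    have := hW (1, 0) (0, 1)
    simpa using this
  have hBA : (W (0, 1)).comp (W (1, 0)) = W (1, 1) := by
    have := hW (0, 1) (1, 0)
    simpa [he0] using this
  -- det W(1,1) ≠ 0
  have h00 : ((1, 1) : ZMod p × ZMod p) + (-1, -1) = (0, 0) := by
    simp [Prod.ext_iff]
  have hinv : (W (1, 1)).comp (W (-1, -1)) = e t • LinearMap.id := by
    have := hW (1, 1) (-1, -1)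
    rw [h00, hW0] at this
    simpa using this
  have hd11 : LinearMap.det (W (1, 1)) ≠ 0 := by
    intro h
    have hdet := congrArg LinearMap.det hinv
    rw [LinearMap.det_comp, h, zero_mul, LinearMap.det_smul,
      LinearMap.det_id, mul_one] at hdet
    exact pow_ne_zero n (hene t) hdet.symm
  -- take determinants
  have hd1 := congrArg LinearMap.det hAB
  have hd2 := congrArg LinearMap.det hBA
  rw [LinearMap.det_comp, LinearMap.det_smul] at hd1
  rw [LinearMap.det_comp] at hd2
  have hpow : e (-t) ^ n = 1 := by
    have : e (-t) ^ n * LinearMap.det (W (1, 1)) =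
        1 * LinearMap.det (W (1, 1)) := by
      rw [hn, ← hd1, one_mul, ← hd2]
      exact mul_comm _ _
    exact mul_right_cancel₀ hd11 this
  rw [he (-t), ← pow_mul] at hpow
  have hdvd : p ∣ (-t).val * n := (hprim.pow_eq_one_iff_dvd _).mp hpow
  rcases (Nat.Prime.dvd_mul hp).mp hdvd with h | h
  · exact absurd ((ZMod.natCast_eq_zero_iff _ _).mpr h)
      (by simpa [ZMod.natCast_val] using neg_ne_zero.mpr ht)
  · exact h
end

section
/- Let p be a prime, ω := Complex.exp(2πi/p), and for z : ZMod p set e(z) := ω^(z.val). Let V be a ℂ-vector space with Module.finrank ℂ V = p, let t : ZMod p with t ≠ 0, and let W : ZMod p × ZMod p → (V →ₗ[ℂ] V) satisfy W (0,0) = LinearMap.id and W u ∘ W v = e(−(t * u.1 * v.2)) • W (u + v) for all u v : ZMod p × ZMod p. Define the standard model ρ₀(g,h) : (ZMod p → ℂ) →ₗ[ℂ] (ZMod p → ℂ) by (ρ₀(g,h) f)(m) = e(t * h * m) * f(m − g). Then there exists a ℂ-linear equivalence Φ : V ≃ₗ[ℂ] (ZMod p → ℂ) such that Φ ∘ W (g,h)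 = ρ₀(g,h) ∘ Φ for all g h : ZMod p. -/
/-! The operators `W (g, 0)` (translations) and `W (0, h)` (modulations) are two representations
of `ZMod p` which commute up to the scalar `ψ (g * h)`, where `ψ x = e (t * x)` is an injective
character because `t ≠ 0`. An eigenvalue of the modulation `W (0, 1)` is a `p`-th root of unity,
hence of the form `ψ c`, and translating its eigenvector by `-c` gives a nonzero vector `v` fixed
by all modulations. The translates `W (a, 0) v` are then eigenvectors of `W (0, 1)` for the
pairwise distinct eigenvalues `ψ a`, so these `p = dim V` vectors form a basis, in whose
coordinates `W` is the standard model. -/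

namespace AddChar

variable {n : ℕ}

theorem isPrimitiveRoot_apply_one {M : Type*} [CommMonoid M] {ψ : AddChar (ZMod n) M}
    (hψ : Function.Injective ψ) : IsPrimitiveRoot (ψ 1) n := by
  refine ⟨?_, fun l hl => ?_⟩
  · rw [← map_nsmul_eq_pow, nsmul_one, ZMod.natCast_self, map_zero_eq_one]
  · rw [← map_nsmul_eq_pow, nsmul_one, ← map_zero_eq_one ψ] at hl
    exact (ZMod.natCast_eq_zero_iff l n).mp (hψ hl)

theorem exists_apply_eq_of_pow_eq_one [NeZero n] {R : Type*} [CommRing R] [IsDomain R]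
    {ψ : AddChar (ZMod n) R} (hψ : Function.Injective ψ) {μ : R} (hμ : μ ^ n = 1) :
    ∃ a, ψ a = μ := by
  obtain ⟨k, -, rfl⟩ := (isPrimitiveRoot_apply_one hψ).eq_pow_of_pow_eq_one hμ
  exact ⟨k, by rw [← map_nsmul_eq_pow, nsmul_one]⟩

end AddChar

open Module

structure IsHeisenbergRep {n : ℕ} {K V : Type*} [Field K] [AddCommGroup V] [Module K V]
    (ψ : AddChar (ZMod n) K) (W : ZMod n × ZMod n → End K V) : Prop where
  map_zero_eq_one : W 0 = 1
  map_mul : ∀ u v, W u * W v = ψ (-(u.1 * v.2)) • W (u + v)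

namespace IsHeisenbergRep

variable {n : ℕ} {K V : Type*} [Field K] [AddCommGroup V] [Module K V]
  {ψ : AddChar (ZMod n) K} {W : ZMod n × ZMod n → End K V}

def translation (hW : IsHeisenbergRep ψ W) : AddChar (ZMod n) (End K V) where
  toFun g := W (g, 0)
  map_zero_eq_one' := hW.map_zero_eq_one
  map_add_eq_mul' g g' := by simp [hW.map_mul]

def modulation (hW : IsHeisenbergRep ψ W) : AddChar (ZMod n) (End K V) where
  toFun h := W (0, h)
  map_zero_eq_one' := hW.map_zero_eq_one
  map_add_eq_mul' h h' := by simp [hW.map_mul]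

section

variable (hW : IsHeisenbergRep ψ W)

theorem apply_eq_modulation_mul_translation (g h : ZMod n) :
    W (g, h) = hW.modulation h * hW.translation g := by
  simp [translation, modulation, hW.map_mul]

theorem modulation_mul_translation (g h : ZMod n) :
    hW.modulation h * hW.translation g = ψ (g * h) • (hW.translation g * hW.modulation h) := by
  have : hW.translation g * hW.modulation h = ψ (-(g * h)) • W (g, h) := by
    simp [translation, modulation, hW.map_mul]
  rw [this, smul_smul, ← AddChar.map_add_eq_mul, add_neg_cancel, AddChar.map_zero_eq_one,
    one_smul, hW.apply_eq_modulation_mul_translation]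

theorem translation_apply_ne_zero {v : V} (hv : v ≠ 0) (g : ZMod n) :
    hW.translation g v ≠ 0 := by
  intro h0
  have := congrArg (hW.translation (-g)) h0
  rw [← End.mul_apply, ← AddChar.map_add_eq_mul, neg_add_cancel] at this
  simp only [AddChar.map_zero_eq_one, End.one_apply, map_zero] at this
  exact hv this

theorem modulation_apply_translation_apply {v : V} (hv : ∀ h, hW.modulation h v = v)
    (a h : ZMod n) : hW.modulation h (hW.translation a v) = ψ (a * h) • hW.translation a v := by
  rw [← End.mul_apply, modulation_mul_translation, LinearMap.smul_apply,
    End.mul_apply, hv]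

theorem modulation_apply_of_hasEigenvector [NeZero n] {v : V} {μ : K}
    (hv : (hW.modulation 1).HasEigenvector μ v) (h : ZMod n) :
    hW.modulation h v = μ ^ h.val • v := by
  rw [← hv.pow_apply, ← AddChar.map_nsmul_eq_pow, nsmul_one, ZMod.natCast_zmod_val]

theorem exists_ne_zero_forall_modulation_apply_eq [NeZero n] [IsAlgClosed K]
    [FiniteDimensional K V] [Nontrivial V] (hψ : Function.Injective ψ) :
    ∃ v : V, v ≠ 0 ∧ ∀ h, hW.modulation h v = v := by
  obtain ⟨μ, hμ⟩ := End.exists_eigenvalue (hW.modulation 1)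
  obtain ⟨v, hv⟩ := hμ.exists_hasEigenvector
  have hμn : μ ^ n = 1 := by
    have h := hv.pow_apply n
    rw [← AddChar.map_nsmul_eq_pow, nsmul_one, ZMod.natCast_self] at h
    exact smul_left_injective K hv.2 (by simpa using h.symm)
  obtain ⟨c, rfl⟩ := AddChar.exists_apply_eq_of_pow_eq_one hψ hμn
  have hv' : (hW.modulation 1).HasEigenvector 1 (hW.translation (-c) v) := by
    refine End.hasEigenvector_iff.mpr ⟨?_, hW.translation_apply_ne_zero hv.2 _⟩
    rw [End.mem_eigenspace_iff, ← End.mul_apply, modulation_mul_translation,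
      LinearMap.smul_apply, End.mul_apply, hv.apply_eq_smul, map_smul, smul_smul,
      mul_one, ← AddChar.map_add_eq_mul, neg_add_cancel, AddChar.map_zero_eq_one, one_smul]
  refine ⟨_, hv'.2, fun h => ?_⟩
  rw [hW.modulation_apply_of_hasEigenvector hv', one_pow, one_smul]

theorem linearIndependent_translation_apply (hψ : Function.Injective ψ) {v : V} (hv0 : v ≠ 0)
    (hv : ∀ h, hW.modulation h v = v) : LinearIndependent K fun a => hW.translation a v :=
  (hW.modulation 1).eigenvectors_linearIndependent' ψ hψ _ fun a =>
    ⟨End.mem_eigenspace_iff.mpr <| by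
      simpa only [mul_one] using hW.modulation_apply_translation_apply hv a 1,
    hW.translation_apply_ne_zero hv0 a⟩

end

theorem exists_basis_apply_eq [NeZero n] [IsAlgClosed K] (hW : IsHeisenbergRep ψ W)
    (hψ : Function.Injective ψ) (hV : finrank K V = n) :
    ∃ b : Basis (ZMod n) K V, ∀ g h a, W (g, h) (b a) = ψ ((a + g) * h) • b (a + g) := by
  have : FiniteDimensional K V := .of_finrank_pos (hV ▸ NeZero.pos n)
  have : Nontrivial V := Module.nontrivial_of_finrank_pos (R := K) (hV ▸ NeZero.pos n)
  obtain ⟨v, hv0, hv⟩ := hW.exists_ne_zero_forall_modulation_apply_eq hψ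
  let b := basisOfLinearIndependentOfCardEqFinrank
    (hW.linearIndependent_translation_apply hψ hv0 hv) (by rw [ZMod.card, hV])
  refine ⟨b, fun g h a => ?_⟩
  rw [coe_basisOfLinearIndependentOfCardEqFinrank, hW.apply_eq_modulation_mul_translation,
    End.mul_apply, ← End.mul_apply (hW.translation g), ← AddChar.map_add_eq_mul,
    add_comm, hW.modulation_apply_translation_apply hv]

end IsHeisenbergRep

/-- Finite Stone–von Neumann uniqueness: every `p`-dimensional projective
representation of `(ZMod p)²` with the Heisenberg cocycle `e(−t u₁ v₂)`
(`t ≠ 0`) is equivalent to the standard model `ρ₀`. -/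
theorem stmt_12 (p : ℕ) [Fact p.Prime]
    (e : ZMod p → ℂ)
    (he : ∀ z : ZMod p, e z = Complex.exp (2 * Real.pi * Complex.I / p) ^ z.val)
    (V : Type*) [AddCommGroup V] [Module ℂ V]
    (hV : Module.finrank ℂ V = p)
    (t : ZMod p) (ht : t ≠ 0)
    (W : ZMod p × ZMod p → (V →ₗ[ℂ] V))
    (hW0 : W (0, 0) = LinearMap.id)
    (hW : ∀ u v : ZMod p × ZMod p,
      (W u).comp (W v) = e (-(t * u.1 * v.2)) • W (u + v))
    (ρ₀ : ZMod p → ZMod p → ((ZMod p → ℂ) →ₗ[ℂ] (ZMod p → ℂ)))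
    (hρ₀ : ∀ (g h : ZMod p) (f : ZMod p → ℂ) (m : ZMod p),
      ρ₀ g h f m = e (t * h * m) * f (m - g)) :
    ∃ Φ : V ≃ₗ[ℂ] (ZMod p → ℂ),
      ∀ g h : ZMod p,
        Φ.toLinearMap.comp (W (g, h)) = (ρ₀ g h).comp Φ.toLinearMap := by
  have hω := Complex.isPrimitiveRoot_exp p (NeZero.ne p)
  let χ := AddChar.zmodChar p hω.pow_eq_one
  have hχ : Function.Injective χ := fun x y hxy =>
    ZMod.val_injective p (hω.pow_inj (ZMod.val_lt x) (ZMod.val_lt y) hxy)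
  have heχ : ∀ z, e z = χ z := he
  have hWrep : IsHeisenbergRep (χ.mulShift t) W := ⟨hW0, fun u v => by
    rw [End.mul_eq_comp, hW, heχ, AddChar.mulShift_apply, mul_neg, mul_assoc]⟩
  have hψ : Function.Injective (χ.mulShift t) := fun x y hxy => mul_left_cancel₀ ht (hχ hxy)
  obtain ⟨b, hb⟩ := hWrep.exists_basis_apply_eq hψ hV
  refine ⟨b.equivFun, fun g h => b.ext fun a => funext fun m => ?_⟩
  simp only [LinearMap.comp_apply, LinearEquiv.coe_coe, hb, map_smul, hρ₀, Pi.smul_apply,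
    b.equivFun_self, smul_eq_mul, AddChar.mulShift_apply, heχ, eq_sub_iff_add_eq]
  split_ifs with hm
  · rw [← hm, mul_assoc t h, mul_comm h]
  · rw [mul_zero, mul_zero]
end
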